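/- arXiv:2006.11589 — 7 statements merged into one kernel-verified Lean document; each statement's English description precedes it below -/
import Mathlib

section
/- Let r, γ, n be positive integers with n ≥ γ ≥ r+1 > 2, and let f : ℕ → ℝ be a positive-valued function. Then the minimum over all reals x_2,...,x_r, y_2,...,y_r satisfying (i) 0 ≤ y_j ≤ x_j for all j ∈ {2,...,r}, (ii) ∑_{j=2}^r x_j = 1, and (iii) γ·∑_{j=2}^r y_j ≤ ∑_{j=2}^r j·x_j, of the objective ∑_{j=2}^r (x_j − y_j)·f(n−j+1), equals min over 2 ≤ j ≤ r of (1 − j/(γ−r+j))·f(n−j+1). -/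
/-!
Weak LP duality gives the lower bound: with `m` the claimed minimum, the multipliers `m` for
`∑ x_j = 1` and `m / (γ - r)` for `γ ∑ y_j ≤ ∑ j x_j` have nonnegative reduced costs, because
`m ≤ (γ - r) f(n-j+1) / (γ - r + j)` and `j ≤ r`. The minimum is attained at the vertex that,
for a minimising index `j`, puts mass `t = j / (γ - r + j)` on `x_r = y_r` and `1 - t` on `x_j`;
this `t` makes the third constraint tight.
-/

open Finset

theorem dual_bound_le_sub_mul {r j : ℕ} {γ m c x y : ℝ} (hrγ : (r : ℝ) < γ) (hjr : j ≤ r)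
    (hm : 0 ≤ m) (hmc : m ≤ (1 - j / (γ - r + j)) * c) (hy : 0 ≤ y) (hyx : y ≤ x) :
    m * x + m / (γ - r) * (j * x - γ * y) ≤ (x - y) * c := by
  have hd : 0 < γ - r := sub_pos.mpr hrγ
  have hjr' : (j : ℝ) ≤ r := by exact_mod_cast hjr
  have hmc' : m * (γ - r + j) ≤ (γ - r) * c := by
    have hD : 0 < γ - r + j := by positivity
    rwa [one_sub_div hD.ne', add_sub_cancel_right, div_mul_eq_mul_div, le_div_iff₀ hD]
      at hmc
  have key : m * x * (γ - r) + m * (j * x - γ * y) ≤ (x - y) * c * (γ - r) := by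
    nlinarith [mul_nonneg (sub_nonneg.mpr hyx) (sub_nonneg.mpr hmc'),
      mul_nonneg (mul_nonneg hy hm) (sub_nonneg.mpr hjr')]
  calc m * x + m / (γ - r) * (j * x - γ * y)
      = (m * x * (γ - r) + m * (j * x - γ * y)) / (γ - r) := by field_simp
    _ ≤ (x - y) * c * (γ - r) / (γ - r) := by gcongr
    _ = (x - y) * c := by field_simp

section

variable {s : Finset ℕ} {r : ℕ} {γ : ℝ} {c : ℕ → ℝ}

theorem le_sum_sub_mul_of_feasible {x y : ℕ → ℝ} {m : ℝ} (hrγ : (r : ℝ) < γ)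
    (hs : ∀ j ∈ s, j ≤ r) (hm : 0 ≤ m) (hmc : ∀ j ∈ s, m ≤ (1 - j / (γ - r + j)) * c j)
    (hxy : ∀ j ∈ s, 0 ≤ y j ∧ y j ≤ x j) (hx : ∑ j ∈ s, x j = 1)
    (hγ : γ * ∑ j ∈ s, y j ≤ ∑ j ∈ s, (j : ℝ) * x j) :
    m ≤ ∑ j ∈ s, (x j - y j) * c j := by
  have hslack : 0 ≤ m / (γ - r) * (∑ j ∈ s, (j : ℝ) * x j - γ * ∑ j ∈ s, y j) :=
    mul_nonneg (div_nonneg hm (sub_pos.mpr hrγ).le) (sub_nonneg.mpr hγ)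
  calc m ≤ m * ∑ j ∈ s, x j + m / (γ - r) * (∑ j ∈ s, (j : ℝ) * x j - γ * ∑ j ∈ s, y j) := by
        rw [hx]; linarith
    _ = ∑ j ∈ s, (m * x j + m / (γ - r) * (j * x j - γ * y j)) := by
        simp only [sum_add_distrib, ← mul_sum, sum_sub_distrib]
    _ ≤ ∑ j ∈ s, (x j - y j) * c j := sum_le_sum fun j hj =>
        dual_bound_le_sub_mul hrγ (hs j hj) hm (hmc j hj) (hxy j hj).1 (hxy j hj).2

theorem exists_feasible_sum_sub_mul_eq {j : ℕ} (hr : r ∈ s) (hj : j ∈ s) (hrγ : (r : ℝ) < γ) :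
    ∃ x y : ℕ → ℝ, (∀ i ∈ s, 0 ≤ y i ∧ y i ≤ x i) ∧ ∑ i ∈ s, x i = 1 ∧
      γ * ∑ i ∈ s, y i ≤ ∑ i ∈ s, (i : ℝ) * x i ∧
      ∑ i ∈ s, (x i - y i) * c i = (1 - j / (γ - r + j)) * c j := by
  have hD : 0 < γ - r + j := by have := sub_pos.mpr hrγ; positivity
  set t : ℝ := j / (γ - r + j)
  have ht0 : 0 ≤ t := by positivity
  have ht1 : t ≤ 1 := by rw [div_le_one hD]; linarith
  refine ⟨Pi.single r t + Pi.single j (1 - t), Pi.single r t, fun i _ => ?_, ?_, ?_, ?_⟩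
  · simp only [Pi.add_apply, Pi.single_apply]
    constructor <;> split_ifs <;> linarith
  · simp [sum_add_distrib, hr, hj]
  · have htight : (γ - r) * t = j * (1 - t) := by
      simp only [t]; field_simp; ring
    simp only [Pi.add_apply, Pi.single_apply, mul_add, mul_ite, mul_zero, sum_add_distrib,
      sum_ite_eq', hr, hj, if_true]
    linarith
  · simp [Pi.single_apply, hj]

end

/-- The LP lemma: the minimum value of the linear program equals
`min_{2 ≤ j ≤ r} (1 - j/(γ-r+j)) f(n-j+1)`. -/
theorem lp_lemma (r γ n : ℕ) (hr : 2 < r + 1) (hγr : r + 1 ≤ γ)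
    (f : ℕ → ℝ) (hf : ∀ m, 0 < f m) :
    IsLeast
      {v : ℝ | ∃ x y : ℕ → ℝ,
        (∀ j ∈ Finset.Icc 2 r, 0 ≤ y j ∧ y j ≤ x j) ∧
        (∑ j ∈ Finset.Icc 2 r, x j = 1) ∧
        ((γ : ℝ) * ∑ j ∈ Finset.Icc 2 r, y j ≤ ∑ j ∈ Finset.Icc 2 r, (j : ℝ) * x j) ∧
        v = ∑ j ∈ Finset.Icc 2 r, (x j - y j) * f (n - j + 1)}
      ((Finset.Icc 2 r).inf' (Finset.nonempty_Icc.mpr (by omega))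
        (fun j => (1 - (j : ℝ) / ((γ : ℝ) - (r : ℝ) + (j : ℝ))) * f (n - j + 1))) := by
  have hrγ : (r : ℝ) < γ := by exact_mod_cast hγr
  constructor
  · obtain ⟨j, hj, hmin⟩ := (Icc 2 r).exists_mem_eq_inf' (nonempty_Icc.mpr (by omega))
      fun j : ℕ => (1 - (j : ℝ) / ((γ : ℝ) - (r : ℝ) + (j : ℝ))) * f (n - j + 1)
    obtain ⟨x, y, hxy, hx, hγ, hval⟩ := exists_feasible_sum_sub_mul_eq
      (c := fun j => f (n - j + 1)) (right_mem_Icc.mpr (by omega)) hj hrγ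
    exact ⟨x, y, hxy, hx, hγ, by rw [hmin, hval]⟩
  · rintro v ⟨x, y, hxy, hx, hγ, rfl⟩
    refine le_sum_sub_mul_of_feasible hrγ (fun j hj => (mem_Icc.mp hj).2) ?_
      (fun j hj => inf'_le _ hj) hxy hx hγ
    refine (le_inf'_iff _ _).mpr fun j _ => mul_nonneg ?_ (hf _).le
    rw [sub_nonneg, div_le_one (by positivity)]
    linarith
end

section
/- Let n, e, σ be positive integers with e ≥ 2 and n − e + 1 > 2σ. Then (C(n−e, σ)/C(n, σ)) · (1/C(n−e+1, 2σ)) ≥ 1/C(n, 2σ), where C(a,b) denotes the binomial coefficient a choose b. -/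
/-!
Since `C(N, 2σ) · C(2σ, σ) = C(N, σ) · C(N - σ, σ)`, the claim reduces to
`C(m + 1, σ) · C(m + 1 - σ, σ) ≤ C(m, σ) · C(n - σ, σ)` with `m = n - e`. This follows from
monotonicity of `C(·, σ)` together with the fact that the ratio `C(N + 1, k) / C(N, k) = (N + 1) / (N + 1 - k)`
is antitone in `N`.
-/

theorem Nat.succ_choose_mul_choose_le_choose_mul_succ_choose {k M N : ℕ} (hkM : k ≤ M)
    (hMN : M ≤ N) : (N + 1).choose k * M.choose k ≤ N.choose k * (M + 1).choose k := by
  have hpos : 0 < (N + 1 - k) * (M + 1) := Nat.mul_pos (by omega) M.succ_pos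
  have hfactor : (N + 1) * (M + 1 - k) ≤ (N + 1 - k) * (M + 1) := by
    zify [hkM, hkM.trans hMN, Nat.le_succ_of_le hkM, Nat.le_succ_of_le (hkM.trans hMN)]
    nlinarith
  refine Nat.le_of_mul_le_mul_left ?_ hpos
  calc (N + 1 - k) * (M + 1) * ((N + 1).choose k * M.choose k)
      = (N + 1).choose k * (N + 1 - k) * (M.choose k * (M + 1)) := by ring
    _ = N.choose k * (M + 1).choose k * ((N + 1) * (M + 1 - k)) := by
        rw [← Nat.choose_mul_succ_eq, Nat.choose_mul_succ_eq M]; ring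
    _ ≤ N.choose k * (M + 1).choose k * ((N + 1 - k) * (M + 1)) :=
        Nat.mul_le_mul_left _ hfactor
    _ = (N + 1 - k) * (M + 1) * (N.choose k * (M + 1).choose k) := by ring

theorem Nat.choose_two_mul_mul_choose (N σ : ℕ) :
    N.choose (2 * σ) * (2 * σ).choose σ = N.choose σ * (N - σ).choose σ := by
  rw [Nat.choose_mul (by omega), show 2 * σ - σ = σ by omega]

theorem Nat.choose_mul_succ_choose_two_mul_le {σ m n : ℕ} (hσ : 0 < σ) (hm : 2 * σ ≤ m)
    (hmn : m + 2 ≤ n) :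
    n.choose σ * (m + 1).choose (2 * σ) ≤ m.choose σ * n.choose (2 * σ) := by
  have hratio : (m + 1).choose σ * (m + 1 - σ).choose σ ≤ m.choose σ * (m + 2 - σ).choose σ := by
    have := Nat.succ_choose_mul_choose_le_choose_mul_succ_choose
      (k := σ) (M := m + 1 - σ) (N := m) (by omega) (by omega)
    rwa [show m + 1 - σ + 1 = m + 2 - σ by omega] at this
  have hmono : (m + 2 - σ).choose σ ≤ (n - σ).choose σ := Nat.choose_le_choose σ (by omega)
  have hpos : 0 < (2 * σ).choose σ * n.choose σ := Nat.mul_pos (Nat.choose_pos (by omega))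
    (Nat.choose_pos (by omega))
  refine Nat.le_of_mul_le_mul_left ?_ hpos
  calc (2 * σ).choose σ * n.choose σ * (n.choose σ * (m + 1).choose (2 * σ))
      = n.choose σ * n.choose σ * ((m + 1).choose (2 * σ) * (2 * σ).choose σ) := by ring
    _ = n.choose σ * n.choose σ * ((m + 1).choose σ * (m + 1 - σ).choose σ) := by
        rw [Nat.choose_two_mul_mul_choose]
    _ ≤ n.choose σ * n.choose σ * (m.choose σ * (n - σ).choose σ) :=
        Nat.mul_le_mul_left _ (hratio.trans (Nat.mul_le_mul_left _ hmono))
    _ = n.choose σ * m.choose σ * (n.choose (2 * σ) * (2 * σ).choose σ) := by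
        rw [Nat.choose_two_mul_mul_choose]; ring
    _ = (2 * σ).choose σ * n.choose σ * (m.choose σ * n.choose (2 * σ)) := by ring

theorem binomial_ratio_ineq_general (n e σ : ℕ) (hσ : 0 < σ)
    (he : 2 ≤ e) (h : 2 * σ < n - e + 1) :
    ((n - e).choose σ : ℝ) / (n.choose σ) * (1 / ((n - e + 1).choose (2 * σ))) ≥
      1 / (n.choose (2 * σ)) := by
  have hσn : 0 < (n.choose σ : ℝ) := by exact_mod_cast Nat.choose_pos (by omega)
  have hm : 0 < ((n - e + 1).choose (2 * σ) : ℝ) := by exact_mod_cast Nat.choose_pos (by omega)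
  have h2σn : 0 < (n.choose (2 * σ) : ℝ) := by exact_mod_cast Nat.choose_pos (by omega)
  rw [ge_iff_le, div_mul_div_comm, mul_one, div_le_div_iff₀ h2σn (by positivity), one_mul]
  exact_mod_cast Nat.choose_mul_succ_choose_two_mul_le hσ (by omega) (by omega)

/-- `(C(n-e,σ)/C(n,σ)) · (1/C(n-e+1,2σ)) ≥ 1/C(n,2σ)`. -/
theorem binomial_ratio_ineq (n e σ : ℕ) (hn : 0 < n) (he0 : 0 < e) (hσ : 0 < σ)
    (he : 2 ≤ e) (h : 2 * σ < n - e + 1) :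
    ((n - e).choose σ : ℝ) / (n.choose σ) * (1 / ((n - e + 1).choose (2 * σ))) ≥
      1 / (n.choose (2 * σ)) :=
  binomial_ratio_ineq_general n e σ hσ he h
end

section
/- Let n, j, t, r be positive integers with n − j + 1 > rt, j > 2t, and j ≤ r. Then the product over ℓ from 0 to 2t−1 of (n − t(r−2) − ℓ)/(n − j + 1 − t(r−2) − ℓ) is at least 1 + jt/(n − rt). -/
open Finset

/-! Each factor has the form `(b + (j - 1)) / b` with `b ≤ B := n - j + 1 - t(r - 2)`, so it is at
least `1 + (j - 1) / B`. Bernoulli's inequality bounds the product of the `2t` factors below by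
`1 + 2t(j - 1) / B`, and `2(j - 1) ≥ j`, `B ≤ n - rt` (as `j > 2t`) give the claim. -/

section OrderedField

variable {K : Type*} [Field K] [LinearOrder K] [IsStrictOrderedRing K]

theorem one_add_div_le_add_div_self {a b B : K} (ha : 0 ≤ a) (hb : 0 < b) (hbB : b ≤ B) :
    1 + a / B ≤ (b + a) / b := by
  rw [add_div, div_self hb.ne']
  gcongr

theorem one_add_mul_div_le_prod_sub_add_div {a B : K} (m : ℕ) (ha : 0 ≤ a) (hB : 0 < B)
    (hmB : (m : K) < B + 1) :
    1 + m * (a / B) ≤ ∏ ℓ ∈ range m, (B - ℓ + a) / (B - ℓ) := by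
  have haB : 0 ≤ a / B := div_nonneg ha hB.le
  calc 1 + m * (a / B) ≤ (1 + a / B) ^ m := one_add_mul_le_pow (by linarith) m
    _ = ∏ _ℓ ∈ range m, (1 + a / B) := by rw [prod_const, card_range]
    _ ≤ ∏ ℓ ∈ range m, (B - ℓ + a) / (B - ℓ) := by
      refine prod_le_prod (fun _ _ ↦ by positivity) fun ℓ hℓ ↦ ?_
      have hℓm : (ℓ : K) + 1 ≤ m := by exact_mod_cast mem_range.mp hℓ
      exact one_add_div_le_add_div_self ha (by linarith) (by linarith [ℓ.cast_nonneg (α := K)])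

end OrderedField

theorem prod_ratio_large_j_general (n j t r : ℕ) (h1 : r * t < n - j + 1) (h2 : 2 * t < j) (h3 : j ≤ r) :
    ∏ ℓ ∈ Finset.range (2 * t),
        ((n : ℝ) - (t * (r - 2) : ℕ) - ℓ) / ((n : ℝ) - j + 1 - (t * (r - 2) : ℕ) - ℓ) ≥
      1 + (j : ℝ) * t / ((n : ℝ) - r * t) := by
  obtain rfl | ht := t.eq_zero_or_pos
  · simp
  -- `n - j + 1` is truncated; `rt > 0` excludes `j > n`.
  have hrt : r * t + j ≤ n := by
    have : 0 < r * t := Nat.mul_pos (by omega) ht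
    omega
  have hcast : ((t * (r - 2) : ℕ) : ℝ) = r * t - 2 * t := by
    rw [Nat.cast_mul, Nat.cast_sub (by omega)]; push_cast; ring
  have hrtR : (r : ℝ) * t + j ≤ n := by exact_mod_cast hrt
  have h2R : (2 * t : ℝ) + 1 ≤ j := by exact_mod_cast h2
  set B : ℝ := n - j + 1 - (r * t - 2 * t) with hB
  have hfactor : ∀ ℓ : ℕ,
      ((n : ℝ) - (t * (r - 2) : ℕ) - ℓ) / ((n : ℝ) - j + 1 - (t * (r - 2) : ℕ) - ℓ) =
        (B - ℓ + (j - 1)) / (B - ℓ) := fun ℓ ↦ by rw [hcast, hB]; ring_nf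
  rw [ge_iff_le, prod_congr rfl fun ℓ _ ↦ hfactor ℓ]
  refine le_trans ?_ (one_add_mul_div_le_prod_sub_add_div (2 * t) (by linarith) (by linarith)
    (by push_cast; linarith))
  push_cast
  rw [mul_div_assoc', add_le_add_iff_left]
  have htR : (1 : ℝ) ≤ t := by exact_mod_cast ht
  have hjt : (j : ℝ) * t ≤ 2 * t * (j - 1) := by nlinarith
  exact div_le_div₀ (by nlinarith) hjt (by linarith) (by linarith)

/-- The telescoping product bound, case `j > 2t`:
`∏_{ℓ=0}^{2t-1} (n - t(r-2) - ℓ)/(n - j + 1 - t(r-2) - ℓ) ≥ 1 + jt/(n - rt)`. -/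
theorem prod_ratio_large_j (n j t r : ℕ) (hn : 0 < n) (hj0 : 0 < j) (ht : 0 < t)
    (hr : 0 < r) (h1 : r * t < n - j + 1) (h2 : 2 * t < j) (h3 : j ≤ r) :
    ∏ ℓ ∈ Finset.range (2 * t),
        ((n : ℝ) - (t * (r - 2) : ℕ) - ℓ) / ((n : ℝ) - j + 1 - (t * (r - 2) : ℕ) - ℓ) ≥
      1 + (j : ℝ) * t / ((n : ℝ) - r * t) :=
  prod_ratio_large_j_general n j t r h1 h2 h3
end

section
/- Let n, e, σ be positive integers with 2 ≤ e ≤ σ and n − e + 1 > 2σ. Then (∏_{i=0}^{σ−1} (n−e−i)/(n−i)) · (∏_{i=0}^{e−2} (n−i)/(n−2σ−i)) ≥ 1. -/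
/-!
Since `e ≤ σ`, the first product telescopes to `∏_{i<e} (n-σ-i)/(n-i)`, and its first `e-1`
denominators cancel against the numerators of the second product. What remains is
`∏_{i<e} (n-σ-i) / ((n-e+1) ∏_{i<e-1} (n-2σ-i))`. Pairing `n-e+1` and `n-2σ` against `n-σ` and
`n-σ-e+1` costs nothing because `(n-σ)(n-σ-e+1) - (n-e+1)(n-2σ) = σ(σ-e+1) ≥ 0`, and every other
factor `n-2σ-i` of the denominator is dominated by the factor `n-σ-i` of the numerator.
-/

open Finset

theorem prod_range_sub_add {R : Type*} [CommRing R] (x : R) (a b : ℕ) :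
    ∏ i ∈ range (a + b), (x - i) = (∏ i ∈ range a, (x - i)) * ∏ i ∈ range b, (x - a - i) := by
  rw [prod_range_add]
  congr 1
  refine prod_congr rfl fun i _ => ?_
  push_cast
  ring

theorem prod_range_sub_div_sub_eq {K : Type*} [Field K] (x : K) {e σ : ℕ} (heσ : e ≤ σ)
    (hx : ∏ i ∈ range σ, (x - i) ≠ 0) :
    ∏ i ∈ range σ, (x - e - i) / (x - i) = ∏ i ∈ range e, (x - σ - i) / (x - i) := by
  have he : ∏ i ∈ range e, (x - i) ≠ 0 := by
    rw [← Nat.add_sub_cancel' heσ, prod_range_sub_add] at hx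
    exact left_ne_zero_of_mul hx
  rw [prod_div_distrib, prod_div_distrib, div_eq_div_iff hx he, mul_comm, ← prod_range_sub_add,
    mul_comm, ← prod_range_sub_add, add_comm]

theorem prod_range_sub_pos (x c : ℝ) (m : ℕ) (h : c + m ≤ x) :
    0 < ∏ i ∈ range m, (x - c - i) :=
  prod_pos fun i hi => by
    have : (i : ℝ) + 1 ≤ m := by exact_mod_cast mem_range.1 hi
    linarith

theorem sub_mul_prod_range_le (x s : ℝ) (j : ℕ) (hjs : j + 1 ≤ s) (hx : 2 * s + j ≤ x) :
    (x - (j + 1)) * ∏ i ∈ range (j + 1), (x - 2 * s - i) ≤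
      ∏ i ∈ range (j + 2), (x - s - i) := by
  have hj : (0 : ℝ) ≤ j := j.cast_nonneg
  rw [prod_range_succ', prod_range_succ, prod_range_succ']
  simp only [Nat.cast_zero, sub_zero, Nat.cast_add, Nat.cast_one]
  have hcross : (x - (j + 1)) * (x - 2 * s) ≤ (x - s) * (x - s - (j + 1)) := by
    nlinarith [mul_nonneg (by linarith : (0 : ℝ) ≤ s) (sub_nonneg.2 hjs)]
  have hrest : ∏ i ∈ range j, (x - 2 * s - (i + 1)) ≤ ∏ i ∈ range j, (x - s - (i + 1)) := by
    refine prod_le_prod (fun i hi => ?_) fun i _ => by linarith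
    have : (i : ℝ) + 1 ≤ j := by exact_mod_cast mem_range.1 hi
    linarith
  have hrest_pos : 0 < ∏ i ∈ range j, (x - s - (i + 1)) :=
    (prod_range_sub_pos x (s + 1) j (by linarith)).trans_eq (prod_congr rfl fun i _ => by ring)
  calc (x - (j + 1)) * ((∏ i ∈ range j, (x - 2 * s - (i + 1))) * (x - 2 * s))
      = (∏ i ∈ range j, (x - 2 * s - (i + 1))) * ((x - (j + 1)) * (x - 2 * s)) := by ring
    _ ≤ (∏ i ∈ range j, (x - s - (i + 1))) * ((x - s) * (x - s - (j + 1))) :=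
        mul_le_mul hrest hcross (mul_nonneg (by linarith) (by linarith)) hrest_pos.le
    _ = _ := by ring

theorem prod_ratio_small_e_general (n e σ : ℕ)
    (he2 : 2 ≤ e) (heσ : e ≤ σ) (h : 2 * σ < n - e + 1) :
    (∏ i ∈ Finset.range σ, ((n : ℝ) - e - i) / ((n : ℝ) - i)) *
      (∏ i ∈ Finset.range (e - 1), ((n : ℝ) - i) / ((n : ℝ) - 2 * σ - i)) ≥ 1 := by
  obtain ⟨j, rfl⟩ : ∃ j, e = j + 2 := ⟨e - 2, by omega⟩
  have hx : 2 * (σ : ℝ) + (j + 2) ≤ n := by exact_mod_cast (by omega : 2 * σ + (j + 2) ≤ n)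
  have hjσ : (j : ℝ) + 2 ≤ σ := by exact_mod_cast heσ
  have hden : ∏ i ∈ range σ, ((n : ℝ) - i) ≠ 0 := by
    simpa using (prod_range_sub_pos n 0 σ (by linarith)).ne'
  have hD : 0 < ∏ i ∈ range (j + 1), ((n : ℝ) - i) := by
    simpa using prod_range_sub_pos n 0 (j + 1) (by push_cast; linarith)
  have hG := prod_range_sub_pos n (2 * σ) (j + 1) (by push_cast; linarith)
  have hy : (0 : ℝ) < n - (j + 1 : ℕ) := by push_cast; linarith
  rw [prod_range_sub_div_sub_eq _ heσ hden, show j + 2 - 1 = j + 1 by omega, prod_div_distrib,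
    prod_div_distrib, prod_range_succ (fun i : ℕ => (n : ℝ) - i) (j + 1), ge_iff_le,
    div_mul_div_comm, one_le_div (mul_pos (mul_pos hD hy) hG)]
  calc _ = (∏ i ∈ range (j + 1), ((n : ℝ) - i)) *
        (((n : ℝ) - (j + 1 : ℕ)) * ∏ i ∈ range (j + 1), ((n : ℝ) - 2 * σ - i)) := by ring
    _ ≤ (∏ i ∈ range (j + 1), ((n : ℝ) - i)) * ∏ i ∈ range (j + 2), ((n : ℝ) - σ - i) := by
        gcongr
        exact_mod_cast sub_mul_prod_range_le n σ j (by linarith) (by linarith)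
    _ = _ := mul_comm _ _

/-- `(∏_{i=0}^{σ-1} (n-e-i)/(n-i)) · (∏_{i=0}^{e-2} (n-i)/(n-2σ-i)) ≥ 1`
for `2 ≤ e ≤ σ` and `n - e + 1 > 2σ`. -/
theorem prod_ratio_small_e (n e σ : ℕ) (hn : 0 < n) (hσ : 0 < σ)
    (he2 : 2 ≤ e) (heσ : e ≤ σ) (h : 2 * σ < n - e + 1) :
    (∏ i ∈ Finset.range σ, ((n : ℝ) - e - i) / ((n : ℝ) - i)) *
      (∏ i ∈ Finset.range (e - 1), ((n : ℝ) - i) / ((n : ℝ) - 2 * σ - i)) ≥ 1 :=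
  prod_ratio_small_e_general n e σ he2 heσ h
end

section
/- Let G be a graph consisting of two vertices u and v joined by t ≥ 1 internally vertex-disjoint paths P_1, ..., P_t, with edge-cost functions c_1,...,c_t where an edge e on path P_i has c_i(e) = 1 and c_j(e) = 1/(t+1) for all j ≠ i. Then every cut of G containing exactly one edge from each path is pareto-optimal: (a) every such cut F has c_i(F) = 2t/(t+1) for all i ∈ [t]; (b) every cut F' containing at least two edges of some path P_i has c_i(F') = 2 > 2t/(t+1); (c) no cut dominates a cut containing exactly one edge from each path. -/
/-!
Along path `i` the edges of a cut `δ(U)` sit exactly where the indicator of `U` changes value,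
so their number is odd if `U` separates `u` from `v` and even otherwise. Hence a proper cut with
at most one edge on each path separates `u` from `v` and has exactly one edge on every path;
otherwise it has two edges on some path `i`. A cut of the first kind costs
`1 + (t - 1)/(t + 1) = 2t/(t + 1)` in every coordinate, one of the second kind already costs `2`
in coordinate `i`, so no cut dominates a cut of the first kind.
-/

open Finset

/-- Vertices of the graph made of two vertices `u = inl true`, `v = inl false` joined by
`t` internally disjoint paths, path `i` having `L i` edges (so `L i - 1` internal
vertices). -/
abbrev PathVert (t : ℕ) (L : Fin t → ℕ) := Bool ⊕ (Σ i : Fin t, Fin (L i - 1))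

/-- Edges: the `j`-th edge of path `i`, for `j : Fin (L i)`. -/
abbrev PathEdge (t : ℕ) (L : Fin t → ℕ) := Σ i : Fin t, Fin (L i)

/-- Endpoints of the `j`-th edge of path `i`: it joins the `(j-1)`-th and the `j`-th
node along path `i`, where node `-1` is `u` and node `L i - 1` is `v`. -/
def pathEnds {t : ℕ} {L : Fin t → ℕ} (e : PathEdge t L) :
    PathVert t L × PathVert t L :=
  (if h : (e.2 : ℕ) = 0 then Sum.inl true
    else Sum.inr ⟨e.1, ⟨(e.2 : ℕ) - 1, by have := e.2.isLt; omega⟩⟩,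
   if h : (e.2 : ℕ) + 1 = L e.1 then Sum.inl false
    else Sum.inr ⟨e.1, ⟨(e.2 : ℕ), by have := e.2.isLt; omega⟩⟩)

/-- `F` is a cut of the multigraph with endpoint map `ends`. -/
def IsCutOf {V E : Type*} [Fintype V] [DecidableEq V] [Fintype E] [DecidableEq E]
    (ends : E → V × V) (F : Finset E) : Prop :=
  ∃ U : Finset V, U.Nonempty ∧ U ≠ Finset.univ ∧
    F = Finset.univ.filter (fun e =>
      ((ends e).1 ∈ U ∧ (ends e).2 ∉ U) ∨ ((ends e).1 ∉ U ∧ (ends e).2 ∈ U))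

/-- `F` dominates `F'` with respect to the cost functions `c`. -/
def DominatesOf {E : Type*} {t : ℕ} (c : Fin t → E → ℝ) (F F' : Finset E) : Prop :=
  (∀ i, ∑ e ∈ F, c i e ≤ ∑ e ∈ F', c i e) ∧ (∃ i, ∑ e ∈ F, c i e < ∑ e ∈ F', c i e)

theorem card_filter_ne_succ_mod_two (g : ℕ → Bool) (n : ℕ) :
    #{k ∈ range n | g k ≠ g (k + 1)} % 2 = if g 0 = g n then 0 else 1 := by
  induction n with
  | zero => simp
  | succ n ih =>
    rw [range_add_one, filter_insert]
    have hn : n ∉ {k ∈ range n | g k ≠ g (k + 1)} := by simp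
    by_cases h : g n = g (n + 1)
    · simp only [h, ne_eq, not_true_eq_false, if_false] at ih ⊢
      exact ih
    · rw [if_pos h, card_insert_of_notMem hn]
      cases h0 : g 0 <;> cases h1 : g n <;> cases h2 : g (n + 1) <;> simp_all <;> omega

theorem eq_apply_zero_of_card_filter_ne_succ_eq_zero {α : Type*} [DecidableEq α] (g : ℕ → α)
    {n : ℕ} (h : #{k ∈ range n | g k ≠ g (k + 1)} = 0) {k : ℕ} (hk : k ≤ n) : g k = g 0 := by
  rw [card_eq_zero, filter_eq_empty_iff] at h
  induction k with
  | zero => rfl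
  | succ k ih =>
    have hstep : g k = g (k + 1) := by simpa using h (mem_range.mpr hk)
    rw [← hstep, ih (by omega)]

section PathGraph

variable {t : ℕ} {L : Fin t → ℕ}

/-- The `k`-th vertex along path `i`, counted from `u` (`k = 0`) to `v` (`k = L i`). -/
def pathVertex (L : Fin t → ℕ) (i : Fin t) (k : ℕ) : PathVert t L :=
  if _ : k = 0 then Sum.inl true
  else if h : k < L i then Sum.inr ⟨i, ⟨k - 1, by omega⟩⟩
  else Sum.inl false

theorem pathVertex_zero (i : Fin t) : pathVertex L i 0 = Sum.inl true := rfl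

theorem pathVertex_length {i : Fin t} (h : 1 ≤ L i) : pathVertex L i (L i) = Sum.inl false := by
  simp [pathVertex, show L i ≠ 0 by omega]

theorem pathVertex_succ (i : Fin t) (m : Fin (L i - 1)) :
    pathVertex L i (m + 1) = Sum.inr ⟨i, m⟩ := by
  have := m.isLt
  simp [pathVertex, show (m : ℕ) + 1 < L i by omega]

theorem pathEnds_mk (i : Fin t) (j : Fin (L i)) :
    pathEnds (⟨i, j⟩ : PathEdge t L) = (pathVertex L i j, pathVertex L i (j + 1)) := by
  have := j.isLt
  unfold pathEnds pathVertex
  refine Prod.ext ?_ ?_ <;> dsimp only <;> split_ifs <;> first | rfl | omega | simp_all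

def pathSide (U : Finset (PathVert t L)) (i : Fin t) (k : ℕ) : Bool :=
  decide (pathVertex L i k ∈ U)

theorem card_filter_fst_cut (U : Finset (PathVert t L)) (i : Fin t) :
    #{e ∈ univ.filter (fun e : PathEdge t L =>
        ((pathEnds e).1 ∈ U ∧ (pathEnds e).2 ∉ U) ∨ ((pathEnds e).1 ∉ U ∧ (pathEnds e).2 ∈ U)) |
        e.1 = i} =
      #{k ∈ range (L i) | pathSide U i k ≠ pathSide U i (k + 1)} := by
  refine card_bij (fun e _ => (e.2 : ℕ)) ?_ ?_ ?_
  · rintro ⟨i', j⟩ he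
    simp only [mem_filter, mem_univ, true_and] at he
    obtain ⟨hcut, rfl⟩ := he
    simp only [mem_filter, mem_range, j.isLt, true_and, pathEnds_mk] at hcut ⊢
    simp only [pathSide, ne_eq, decide_eq_decide]
    tauto
  · rintro ⟨i₁, j₁⟩ h₁ ⟨i₂, j₂⟩ h₂ hj
    simp only [mem_filter] at h₁ h₂
    obtain rfl := h₁.2
    obtain rfl := h₂.2
    simp_all [Fin.ext_iff]
  · intro k hk
    simp only [pathSide, mem_filter, mem_range, ne_eq, decide_eq_decide] at hk
    refine ⟨⟨i, ⟨k, hk.1⟩⟩, ?_, rfl⟩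
    simp only [mem_filter, mem_univ, true_and, pathEnds_mk, and_true]
    tauto

theorem mem_iff_of_forall_pathSide_eq (hL : ∀ i, 1 ≤ L i) (i₀ : Fin t) {U : Finset (PathVert t L)}
    (h : ∀ i, ∀ k ≤ L i, pathSide U i k = pathSide U i 0) (x : PathVert t L) :
    x ∈ U ↔ Sum.inl true ∈ U := by
  have hmem (i : Fin t) (k : ℕ) (hk : k ≤ L i) : pathVertex L i k ∈ U ↔ Sum.inl true ∈ U := by
    rw [← decide_eq_decide]
    exact h i k hk
  rcases x with (_ | _) | ⟨i, m⟩
  · simpa [pathVertex_length (hL i₀)] using hmem i₀ (L i₀) le_rfl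
  · rfl
  · have := m.isLt
    simpa [pathVertex_succ] using hmem i (m + 1) (by omega)

theorem IsCutOf.exists_two_le_or_forall_eq_one (hL : ∀ i, 1 ≤ L i) {F : Finset (PathEdge t L)}
    (hF : IsCutOf pathEnds F) :
    (∃ i, 2 ≤ #{e ∈ F | e.1 = i}) ∨ ∀ i, #{e ∈ F | e.1 = i} = 1 := by
  obtain ⟨U, hUne, hUuniv, rfl⟩ := hF
  refine or_iff_not_imp_left.mpr fun hle i₀ => ?_
  simp only [not_exists, not_le, card_filter_fst_cut] at hle ⊢
  have hparity (i : Fin t) := card_filter_ne_succ_mod_two (pathSide U i) (L i)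
  have hends (i : Fin t) : (pathSide U i 0 = pathSide U i (L i)) ↔
      (Sum.inl true ∈ U ↔ Sum.inl false ∈ U) := by
    rw [pathSide, pathSide, pathVertex_zero, pathVertex_length (hL i)]
    exact decide_eq_decide
  by_cases hsep : Sum.inl true ∈ U ↔ Sum.inl false ∈ U
  · exfalso
    have hconst : ∀ i, ∀ k ≤ L i, pathSide U i k = pathSide U i 0 := by
      intro i k hk
      have := hparity i
      rw [if_pos ((hends i).mpr hsep)] at this
      exact eq_apply_zero_of_card_filter_ne_succ_eq_zero _ (by have := hle i; omega) hk
    have hside := mem_iff_of_forall_pathSide_eq hL i₀ hconst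
    by_cases hu : Sum.inl true ∈ U
    · exact hUuniv (eq_univ_of_forall fun x => (hside x).mpr hu)
    · obtain ⟨x, hx⟩ := hUne
      exact hu ((hside x).mp hx)
  · have := hparity i₀
    rw [if_neg (mt (hends i₀).mp hsep)] at this
    have := hle i₀
    omega

end PathGraph

theorem card_eq_of_forall_card_filter_fst_eq_one {ι : Type*} [Fintype ι] [DecidableEq ι]
    {β : ι → Type*} {F : Finset (Σ i, β i)} (h : ∀ i, #{e ∈ F | e.1 = i} = 1) :
    #F = Fintype.card ι := by
  rw [card_eq_sum_card_fiberwise (f := Sigma.fst) (t := univ) fun _ _ => mem_univ _]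
  simp [h]

section Costs

variable {t : ℕ} {β : Fin t → Type*}

noncomputable def pathCost (i : Fin t) (e : Σ j, β j) : ℝ := if e.1 = i then 1 else 1 / (t + 1)

theorem sum_pathCost (F : Finset (Σ j, β j)) (i : Fin t) :
    ∑ e ∈ F, pathCost i e = #{e ∈ F | e.1 = i} + #{e ∈ F | ¬e.1 = i} / (t + 1) := by
  simp only [pathCost, sum_ite, sum_const, nsmul_eq_mul, mul_one, mul_one_div]

theorem sum_pathCost_of_forall_card_eq_one {F : Finset (Σ j, β j)}
    (hF : ∀ i, #{e ∈ F | e.1 = i} = 1) (i : Fin t) :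
    ∑ e ∈ F, pathCost i e = 2 * t / (t + 1) := by
  have hoff : (#{e ∈ F | ¬e.1 = i} : ℝ) = t - 1 := by
    have hsplit := card_filter_add_card_filter_not (s := F) (fun e => e.1 = i)
    rw [hF i, card_eq_of_forall_card_filter_fst_eq_one hF, Fintype.card_fin] at hsplit
    rw [eq_sub_iff_add_eq']
    exact_mod_cast hsplit
  rw [sum_pathCost, hF i, hoff]
  field_simp
  ring

theorem two_le_sum_pathCost {F : Finset (Σ j, β j)} {i : Fin t} (h : 2 ≤ #{e ∈ F | e.1 = i}) :
    2 ≤ ∑ e ∈ F, pathCost i e := by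
  rw [sum_pathCost]
  have : (2 : ℝ) ≤ #{e ∈ F | e.1 = i} := by exact_mod_cast h
  have : (0 : ℝ) ≤ #{e ∈ F | ¬e.1 = i} / (t + 1) := by positivity
  linarith

end Costs

theorem path_graph_pareto_general (t : ℕ) (L : Fin t → ℕ)
    (c : Fin t → PathEdge t L → ℝ)
    (hc : ∀ i e, c i e = if e.1 = i then (1 : ℝ) else 1 / (t + 1)) :
    (∀ F : Finset (PathEdge t L), IsCutOf pathEnds F →
      (∀ i, (F.filter (fun e => e.1 = i)).card = 1) →
      ∀ i, ∑ e ∈ F, c i e = 2 * t / (t + 1)) ∧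
    (∀ F' : Finset (PathEdge t L), IsCutOf pathEnds F' →
      ∀ i, 2 ≤ (F'.filter (fun e => e.1 = i)).card →
      (2 ≤ ∑ e ∈ F', c i e ∧ 2 * (t : ℝ) / (t + 1) < 2)) ∧
    (∀ F : Finset (PathEdge t L), IsCutOf pathEnds F →
      (∀ i, (F.filter (fun e => e.1 = i)).card = 1) →
      ∀ F' : Finset (PathEdge t L), IsCutOf pathEnds F' → ¬ DominatesOf c F' F) := by
  obtain rfl : c = pathCost := funext fun i => funext (hc i)
  have hlt : 2 * (t : ℝ) / (t + 1) < 2 := by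
    rw [div_lt_iff₀ (by positivity)]
    linarith
  refine ⟨fun F _ hF => sum_pathCost_of_forall_card_eq_one hF,
    fun F' _ i hi => ⟨two_le_sum_pathCost hi, hlt⟩, ?_⟩
  rintro F - hF F' hF' ⟨hle, i, hlt'⟩
  have hL (j : Fin t) : 1 ≤ L j := by
    obtain ⟨e, he⟩ := card_pos.mp (hF j).ge
    rw [mem_filter] at he
    exact he.2 ▸ Fin.pos e.2
  rcases hF'.exists_two_le_or_forall_eq_one hL with ⟨j, hj⟩ | hF'one
  · have := hle j
    rw [sum_pathCost_of_forall_card_eq_one hF] at this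
    linarith [two_le_sum_pathCost hj]
  · rw [sum_pathCost_of_forall_card_eq_one hF, sum_pathCost_of_forall_card_eq_one hF'one] at hlt'
    exact hlt'.false

/-- In the `t`-path graph with costs `c i e = 1` if `e` lies on path `i` and
`1/(t+1)` otherwise, every cut containing exactly one edge from each path is
pareto-optimal. -/
theorem path_graph_pareto (t : ℕ) (ht : 1 ≤ t) (L : Fin t → ℕ) (hL : ∀ i, 1 ≤ L i)
    (c : Fin t → PathEdge t L → ℝ)
    (hc : ∀ i e, c i e = if e.1 = i then (1 : ℝ) else 1 / (t + 1)) :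
    (∀ F : Finset (PathEdge t L), IsCutOf pathEnds F →
      (∀ i, (F.filter (fun e => e.1 = i)).card = 1) →
      ∀ i, ∑ e ∈ F, c i e = 2 * t / (t + 1)) ∧
    (∀ F' : Finset (PathEdge t L), IsCutOf pathEnds F' →
      ∀ i, 2 ≤ (F'.filter (fun e => e.1 = i)).card →
      (2 ≤ ∑ e ∈ F', c i e ∧ 2 * (t : ℝ) / (t + 1) < 2)) ∧
    (∀ F : Finset (PathEdge t L), IsCutOf pathEnds F →
      (∀ i, (F.filter (fun e => e.1 = i)).card = 1) →
      ∀ F' : Finset (PathEdge t L), IsCutOf pathEnds F' → ¬ DominatesOf c F' F) :=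
  path_graph_pareto_general t L c hc
end

section
/- Let n, e, σ be positive integers with n − e + 1 > 2σ and e > σ. Then (∏_{i=0}^{σ−1} (n−e−i)/(n−i)) · (2σ)!/(∏_{i=0}^{2σ−1} (n−e+1−i)) ≥ (2σ)!/(∏_{i=0}^{2σ−1} (n−i)) = 1/C(n, 2σ). -/
/-!
In terms of descending factorials the inequality is a statement about natural numbers.
Split each descending product of length `2σ` into two blocks of length `σ`. After cancelling
the common block `n (n-1) ⋯ (n-σ+1)`, the remaining `2σ` factors on the left are bounded one by one
by those on the right: `n-e+1-i ≤ n-σ-i` because `e > σ`, and `n-e+1-σ-i ≤ n-e-i` because `σ ≥ 1`.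
-/

open Finset

namespace Nat

theorem cast_descFactorial_eq_prod_range {R : Type*} [CommRing R] (n k : ℕ) :
    (n.descFactorial k : R) = ∏ i ∈ range k, ((n : R) - i) := by
  rw [← descPochhammer_eval_eq_descFactorial, descPochhammer_eval_eq_prod_range]

theorem descFactorial_two_mul (n k : ℕ) :
    n.descFactorial (2 * k) = n.descFactorial k * (n - k).descFactorial k := by
  rw [← descFactorial_mul_descFactorial (by omega : k ≤ 2 * k), mul_comm, two_mul,
    Nat.add_sub_cancel]

theorem descFactorial_mul_descFactorial_two_mul_le {n e σ : ℕ} (he : e ≤ n) (heσ : σ < e) :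
    n.descFactorial σ * (n - e + 1).descFactorial (2 * σ) ≤
      (n - e).descFactorial σ * n.descFactorial (2 * σ) := by
  rcases σ.eq_zero_or_pos with rfl | hσ
  · simp
  rw [descFactorial_two_mul, descFactorial_two_mul]
  calc n.descFactorial σ * ((n - e + 1).descFactorial σ * (n - e + 1 - σ).descFactorial σ)
      ≤ n.descFactorial σ * ((n - σ).descFactorial σ * (n - e).descFactorial σ) :=
        Nat.mul_le_mul_left _ <|
          Nat.mul_le_mul (descFactorial_le _ (by omega)) (descFactorial_le _ (by omega))
    _ = (n - e).descFactorial σ * (n.descFactorial σ * (n - σ).descFactorial σ) := by ring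

theorem factorial_div_descFactorial {K : Type*} [Field K] [CharZero K] (n k : ℕ) :
    (k ! : K) / n.descFactorial k = 1 / n.choose k := by
  rw [descFactorial_eq_factorial_mul_choose, cast_mul,
    div_mul_cancel_left₀ (by exact_mod_cast k.factorial_ne_zero), one_div]

end Nat

theorem prod_ratio_large_e_general (n e σ : ℕ) (hσ : 0 < σ)
    (h : 2 * σ < n - e + 1) (heσ : σ < e) :
    ((∏ i ∈ Finset.range σ, ((n : ℝ) - e - i) / ((n : ℝ) - i)) *
        (((2 * σ).factorial : ℝ) / ∏ i ∈ Finset.range (2 * σ), ((n : ℝ) - e + 1 - i)) ≥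
      ((2 * σ).factorial : ℝ) / ∏ i ∈ Finset.range (2 * σ), ((n : ℝ) - i)) ∧
    ((2 * σ).factorial : ℝ) / (∏ i ∈ Finset.range (2 * σ), ((n : ℝ) - i)) =
      1 / (n.choose (2 * σ) : ℝ) := by
  have he : e ≤ n := by omega
  have hprodA : ∏ i ∈ range σ, ((n : ℝ) - e - i) = ((n - e).descFactorial σ : ℝ) := by
    rw [Nat.cast_descFactorial_eq_prod_range, Nat.cast_sub he]
  have hprodC : ∏ i ∈ range (2 * σ), ((n : ℝ) - e + 1 - i) =
      ((n - e + 1).descFactorial (2 * σ) : ℝ) := by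
    rw [Nat.cast_descFactorial_eq_prod_range, Nat.cast_add_one, Nat.cast_sub he]
  rw [prod_div_distrib, hprodA, hprodC, ← Nat.cast_descFactorial_eq_prod_range,
    ← Nat.cast_descFactorial_eq_prod_range]
  refine ⟨?_, Nat.factorial_div_descFactorial n (2 * σ)⟩
  have hB : (0 : ℝ) < n.descFactorial σ := by exact_mod_cast Nat.descFactorial_pos.2 (by omega)
  have hC : (0 : ℝ) < (n - e + 1).descFactorial (2 * σ) := by
    exact_mod_cast Nat.descFactorial_pos.2 (by omega)
  have hD : (0 : ℝ) < n.descFactorial (2 * σ) := by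
    exact_mod_cast Nat.descFactorial_pos.2 (by omega)
  rw [ge_iff_le, div_mul_div_comm, div_le_div_iff₀ hD (mul_pos hB hC),
    mul_comm ((n - e).descFactorial σ : ℝ), mul_assoc]
  exact_mod_cast Nat.mul_le_mul_left _ (Nat.descFactorial_mul_descFactorial_two_mul_le he heσ)

/-- The case `e > σ` of the binomial ratio inequality, in product form:
`(∏_{i=0}^{σ-1} (n-e-i)/(n-i)) · (2σ)!/(∏_{i=0}^{2σ-1}(n-e+1-i))
  ≥ (2σ)!/(∏_{i=0}^{2σ-1}(n-i)) = 1/C(n,2σ)`. -/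
theorem prod_ratio_large_e (n e σ : ℕ) (hn : 0 < n) (he0 : 0 < e) (hσ : 0 < σ)
    (h : 2 * σ < n - e + 1) (heσ : σ < e) :
    ((∏ i ∈ Finset.range σ, ((n : ℝ) - e - i) / ((n : ℝ) - i)) *
        (((2 * σ).factorial : ℝ) / ∏ i ∈ Finset.range (2 * σ), ((n : ℝ) - e + 1 - i)) ≥
      ((2 * σ).factorial : ℝ) / ∏ i ∈ Finset.range (2 * σ), ((n : ℝ) - i)) ∧
    ((2 * σ).factorial : ℝ) / (∏ i ∈ Finset.range (2 * σ), ((n : ℝ) - i)) =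
      1 / (n.choose (2 * σ) : ℝ) :=
  prod_ratio_large_e_general n e σ hσ h heσ
end

section
/- Let a_2, ..., a_r, b_2, ..., b_r and q_2, ..., q_r be nonnegative reals satisfying 0 ≤ b_j ≤ a_j for all j, ∑_{j=2}^r a_j = 1, and γ·∑_{j=2}^r b_j ≤ ∑_{j=2}^r j·a_j for some real γ ≥ r+1 > 2. Then ∑_{j=2}^r (a_j − b_j)·q_j ≥ min_{2 ≤ j ≤ r} (1 − j/(γ−r+j))·q_j, provided each q_j > 0. -/
/-!
Write `c = γ - r ≥ 1`. Since `j ≤ r`, the constraint gives `∑ j b_j ≤ r ∑ b_j ≤ (γ - c) ∑ b_j`,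
hence `∑ (a_j - b_j)(c + j) ≥ c ∑ a_j = c`. So the weights `(a_j - b_j)(c + j)/c` are nonnegative
with total mass at least `1`, and the objective is their combination of the nonnegative values
`(1 - j/(c + j)) q_j = c q_j/(c + j)`, which is at least the smallest of those values.
-/

open Finset

variable {ι R : Type*} [CommRing R] [LinearOrder R] [IsStrictOrderedRing R]

theorem inf'_le_sum_mul_of_one_le_sum {s : Finset ι} (H : s.Nonempty) {x f : ι → R}
    (hx : ∀ j ∈ s, 0 ≤ x j) (hf : ∀ j ∈ s, 0 ≤ f j) (hsum : 1 ≤ ∑ j ∈ s, x j) :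
    s.inf' H f ≤ ∑ j ∈ s, x j * f j := by
  have hinf : 0 ≤ s.inf' H f := le_inf' H f hf
  calc s.inf' H f ≤ (∑ j ∈ s, x j) * s.inf' H f := le_mul_of_one_le_left hinf hsum
    _ = ∑ j ∈ s, x j * s.inf' H f := sum_mul ..
    _ ≤ ∑ j ∈ s, x j * f j :=
      sum_le_sum fun j hj => mul_le_mul_of_nonneg_left (inf'_le f hj) (hx j hj)

theorem sub_natCast_le_sum_sub_mul {s : Finset ℕ} {r : ℕ} {γ : R} {a b : ℕ → R}
    (hs : ∀ j ∈ s, j ≤ r) (hb : ∀ j ∈ s, 0 ≤ b j) (ha : ∑ j ∈ s, a j = 1)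
    (hconstr : γ * ∑ j ∈ s, b j ≤ ∑ j ∈ s, (j : R) * a j) :
    γ - r ≤ ∑ j ∈ s, (a j - b j) * (γ - r + j) := by
  have hjb : ∑ j ∈ s, (j : R) * b j ≤ r * ∑ j ∈ s, b j := by
    rw [mul_sum]
    exact sum_le_sum fun j hj => mul_le_mul_of_nonneg_right (by exact_mod_cast hs j hj) (hb j hj)
  have hexpand : ∑ j ∈ s, (a j - b j) * (γ - r + j) = (γ - r) * (∑ j ∈ s, a j - ∑ j ∈ s, b j)
      + (∑ j ∈ s, (j : R) * a j - ∑ j ∈ s, (j : R) * b j) := by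
    simp only [mul_sub, mul_sum, ← sum_sub_distrib, ← sum_add_distrib]
    exact sum_congr rfl fun j _ => by ring
  rw [hexpand, ha]
  linarith

/-- Lower-bound direction of the LP lemma: every feasible point of the LP has
objective value at least `min_{2 ≤ j ≤ r} (1 - j/(γ-r+j))·q_j`. -/
theorem lp_lower_bound (r : ℕ) (hr : 2 < r + 1) (γ : ℝ) (hγ : (r : ℝ) + 1 ≤ γ)
    (a b q : ℕ → ℝ)
    (hab : ∀ j ∈ Finset.Icc 2 r, 0 ≤ b j ∧ b j ≤ a j)
    (ha : ∑ j ∈ Finset.Icc 2 r, a j = 1)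
    (hconstr : γ * ∑ j ∈ Finset.Icc 2 r, b j ≤ ∑ j ∈ Finset.Icc 2 r, (j : ℝ) * a j)
    (hq : ∀ j ∈ Finset.Icc 2 r, 0 < q j) :
    ∑ j ∈ Finset.Icc 2 r, (a j - b j) * q j ≥
      (Finset.Icc 2 r).inf' (Finset.nonempty_Icc.mpr (by omega))
        (fun j => (1 - (j : ℝ) / (γ - r + j)) * q j) := by
  have hc : 0 < γ - r := by linarith
  have hcj : ∀ j : ℕ, 0 < γ - r + j := fun j => by positivity
  have hfeas := sub_natCast_le_sum_sub_mul (fun j hj => (mem_Icc.mp hj).2)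
    (fun j hj => (hab j hj).1) ha hconstr
  have hq_eq : ∀ j : ℕ, (a j - b j) * q j
      = (a j - b j) * (γ - r + j) / (γ - r) * ((1 - j / (γ - r + j)) * q j) := fun j => by
    field_simp [(hcj j).ne', hc.ne']
    ring
  rw [ge_iff_le, sum_congr rfl fun j _ => hq_eq j]
  refine inf'_le_sum_mul_of_one_le_sum _ (fun j hj => ?_) (fun j hj => ?_) ?_
  · exact div_nonneg (mul_nonneg (sub_nonneg.mpr (hab j hj).2) (hcj j).le) hc.le
  · rw [one_sub_div (hcj j).ne']
    exact mul_nonneg (div_nonneg (by ring_nf; linarith) (hcj j).le) (hq j hj).le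
  · rwa [← sum_div, one_le_div hc]
end
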